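/- arXiv:2103.17042 — 4 statements merged into one kernel-verified Lean document; each statement's English description precedes it below -/
import Mathlib

section
/- Let n ≥ 3 and r_1 ≤ ... ≤ r_n be positive integers with d = Σ r_i, excluding the cases (n = 3, r_n ≤ 2) and (n = 4, all r_i = 1). Fix k with 1 ≤ k ≤ n. Then there exist nonnegative integers s_1, ..., s_n such that Σ_{i=1}^n s_i ≥ 2·s_ℓ + 2·r_ℓ + 2 − d for all ℓ ≠ k, and Σ_{i=1}^n s_i = 2·s_k + 2 + 2·r_k − d. -/
theorem stmt_3 (n d : ℕ) (hn : 3 ≤ n) (r : Fin n → ℕ)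
    (hrpos : ∀ i, 1 ≤ r i) (hrmono : Monotone r) (hd : d = ∑ i, r i)
    (h3 : ¬(n = 3 ∧ ∀ i, r i ≤ 2)) (h4 : ¬(n = 4 ∧ ∀ i, r i = 1))
    (k : Fin n) :
    ∃ s : Fin n → ℕ,
      (∀ ℓ : Fin n, ℓ ≠ k →
        2 * (s ℓ : ℤ) + 2 * (r ℓ : ℤ) + 2 - (d : ℤ) ≤ ∑ i, (s i : ℤ)) ∧
      (∑ i, (s i : ℤ)) = 2 * (s k : ℤ) + 2 + 2 * (r k : ℤ) - (d : ℤ) := by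
  set c : ℕ := 2 * r k + 2 with hc
  set s : Fin n → ℕ := fun i => if i = k then (n - 2) * c + d else c with hs
  have hck : (c : ℤ) = 2 * (r k : ℤ) + 2 := by rw [hc]; push_cast; ring
  have hsk : (s k : ℤ) = ((n : ℤ) - 2) * c + d := by
    simp only [hs, if_pos rfl]
    push_cast [Nat.cast_sub (by omega : 2 ≤ n)]
    ring
  have hsum : ∑ i, (s i : ℤ) = ((n : ℤ) - 2) * c + d + ((n : ℤ) - 1) * c := by
    rw [Fintype.sum_eq_add_sum_compl k, hsk]
    have h1 : ∀ i ∈ ({k}ᶜ : Finset (Fin n)), (s i : ℤ) = (c : ℤ) := by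
      intro i hi
      simp only [Finset.mem_compl, Finset.mem_singleton] at hi
      simp [hs, hi]
    rw [Finset.sum_congr rfl h1, Finset.sum_const, nsmul_eq_mul,
      Finset.card_compl, Fintype.card_fin, Finset.card_singleton,
      Nat.cast_sub (by omega : 1 ≤ n)]
    push_cast
    ring
  refine ⟨s, ?_, ?_⟩
  · intro ℓ hℓ
    have hsl : (s ℓ : ℤ) = c := by simp [hs, hℓ]
    have hdl : (r ℓ : ℤ) ≤ d := by
      have := Finset.single_le_sum (f := fun i => r i) (fun i _ => Nat.zero_le _)
        (Finset.mem_univ ℓ)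
      rw [hd]; exact_mod_cast this
    have hcn : (3 : ℤ) ≤ n := by exact_mod_cast hn
    have hcpos : (2 : ℤ) ≤ (c : ℤ) := by
      have : 2 ≤ c := by omega
      exact_mod_cast this
    rw [hsum, hsl]
    nlinarith [mul_nonneg (by linarith : (0:ℤ) ≤ (n : ℤ) - 3) (by linarith : (0:ℤ) ≤ (c:ℤ))]
  · rw [hsum, hsk, hck]
    ring
end

section
/- Let n ≥ 3 and r_1 ≤ ... ≤ r_n be positive integers with d = Σ r_i such that 2·r_k + 2 ≤ d for all k ≤ n−1 and d ≥ r_k + r_n + 2 for all k ≤ n−1. Fix k with 1 ≤ k ≤ n−1. Define s_n = 0, s_ℓ = ⌊d/2⌋ − r_ℓ − 1 for ℓ ≤ n−1 with ℓ ≠ k, and s_k = Σ_{ℓ ≤ n−1, ℓ ≠ k} s_ℓ − 2 − 2·r_k + d. Then all s_i ≥ 0, Σ s_i = 2·s_k + 2 + 2·r_k − d, and Σ s_i ≥ 2·s_ℓ + 2·r_ℓ + 2 − d for all ℓ ≠ k. -/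
theorem stmt_5 (n d : ℕ) (hn : 3 ≤ n) (r : Fin n → ℕ)
    (hrpos : ∀ i, 1 ≤ r i) (hrmono : Monotone r) (hd : d = ∑ i, r i)
    (h2 : ∀ k : Fin n, (k : ℕ) + 1 < n → 2 * r k + 2 ≤ d)
    (h2' : ∀ k : Fin n, (k : ℕ) + 1 < n → r k + r ⟨n - 1, by omega⟩ + 2 ≤ d)
    (k : Fin n) (hk : (k : ℕ) + 1 < n)
    (s : Fin n → ℤ)
    (hsn : s ⟨n - 1, by omega⟩ = 0)
    (hs1 : ∀ ℓ : Fin n, (ℓ : ℕ) + 1 < n → ℓ ≠ k →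
      s ℓ = ((d / 2 : ℕ) : ℤ) - (r ℓ : ℤ) - 1)
    (hsk : s k = (∑ ℓ ∈ Finset.univ.filter
        (fun ℓ : Fin n => (ℓ : ℕ) + 1 < n ∧ ℓ ≠ k), s ℓ)
      - 2 - 2 * (r k : ℤ) + (d : ℤ)) :
    (∀ i, 0 ≤ s i) ∧
    (∑ i, s i) = 2 * s k + 2 + 2 * (r k : ℤ) - (d : ℤ) ∧
    (∀ ℓ : Fin n, ℓ ≠ k →
      2 * s ℓ + 2 * (r ℓ : ℤ) + 2 - (d : ℤ) ≤ ∑ i, s i) := by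
  set N : Fin n := ⟨n - 1, by omega⟩ with hN
  have hkN : k ≠ N := by
    intro h
    have : (k : ℕ) = n - 1 := by rw [h]
    omega
  set A := Finset.univ.filter
      (fun ℓ : Fin n => (ℓ : ℕ) + 1 < n ∧ ℓ ≠ k) with hA
  -- nonnegativity on A
  have hAnn : ∀ ℓ ∈ A, 0 ≤ s ℓ := by
    intro ℓ hℓ
    rw [hA, Finset.mem_filter] at hℓ
    rw [hs1 ℓ hℓ.2.1 hℓ.2.2]
    have := h2 ℓ hℓ.2.1
    omega
  have hTnn : 0 ≤ ∑ ℓ ∈ A, s ℓ := Finset.sum_nonneg hAnn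
  have hskval := hsk
  have h2k := h2 k hk
  have hsknn : 0 ≤ s k := by omega
  -- sum decomposition
  have hsplit : ∑ i, s i = (∑ ℓ ∈ A, s ℓ) + s k := by
    have h1 : ∑ i, s i = (∑ ℓ ∈ A, s ℓ)
        + ∑ ℓ ∈ Finset.univ.filter
          (fun ℓ : Fin n => ¬((ℓ : ℕ) + 1 < n ∧ ℓ ≠ k)), s ℓ := by
      rw [hA, Finset.sum_filter_add_sum_filter_not]
    have h2f : Finset.univ.filter
        (fun ℓ : Fin n => ¬((ℓ : ℕ) + 1 < n ∧ ℓ ≠ k)) = {k, N} := by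
      ext ℓ
      simp only [Finset.mem_filter, Finset.mem_univ, true_and,
        Finset.mem_insert, Finset.mem_singleton]
      constructor
      · intro h
        by_cases hc : ℓ = k
        · exact Or.inl hc
        · right
          have hlt := ℓ.isLt
          have : ¬ ((ℓ : ℕ) + 1 < n) := fun hh => h ⟨hh, hc⟩
          have : (ℓ : ℕ) = n - 1 := by omega
          exact Fin.ext (by simpa [hN] using this)
      · intro h
        rcases h with h | h
        · exact fun hh => hh.2 h
        · intro hh
          rw [h] at hh
          simp only [hN] at hh
          omega
    rw [h1, h2f, Finset.sum_pair hkN, hsn]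
    ring
  have hsum : (∑ i, s i) = 2 * s k + 2 + 2 * (r k : ℤ) - (d : ℤ) := by
    rw [hsplit]; omega
  refine ⟨?_, hsum, ?_⟩
  · intro i
    by_cases hik : i = k
    · rw [hik]; exact hsknn
    · by_cases hin : (i : ℕ) + 1 < n
      · exact hAnn i (by rw [hA, Finset.mem_filter]; exact ⟨Finset.mem_univ i, hin, hik⟩)
      · have hlt := i.isLt
        have : i = N := Fin.ext (by simp only [hN]; omega)
        rw [this, hsn]
  · intro ℓ hℓ
    rw [hsum]
    by_cases hln : (ℓ : ℕ) + 1 < n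
    · -- ℓ ∈ A; need s ℓ + r ℓ ≤ s k + r k
      have hℓA : ℓ ∈ A := by
        rw [hA, Finset.mem_filter]; exact ⟨Finset.mem_univ ℓ, hln, hℓ⟩
      have hle : s ℓ ≤ ∑ x ∈ A, s x := Finset.single_le_sum hAnn hℓA
      have hsl := hs1 ℓ hln hℓ
      have hrm : r ℓ ≤ r N := hrmono (by simp only [hN, Fin.le_def]; omega)
      have h2'' := h2' k hk
      have h2l := h2 ℓ hln
      omega
    · have hlt := ℓ.isLt
      have : ℓ = N := Fin.ext (by simp only [hN]; omega)
      rw [this, hsn]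
      have h2'' := h2' k hk
      omega
end

section
/- Let n ≥ 3 and r_1 ≤ ... ≤ r_n be positive integers with d = Σ r_i, excluding (n = 3, r_n ≤ 2) and (n = 4, all r_i = 1); in particular d > r_n + 2. Let a ∈ ℤ^d with all a_i ≥ 1 and Σ a_i ≥ 2 + 2·Σ_{j∈V_k} a_j for all k, and let u ∈ ℕ^d with Σ u_i ≥ d − r_k − 2 + 2·Σ_{j∈V_k} u_j for all k, and u ≠ 0. Then Σ a_i + Σ u_i − d ≥ 3. -/
theorem stmt_6 (n d : ℕ) (hn : 3 ≤ n) (r : Fin n → ℕ)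
    (hrpos : ∀ i, 1 ≤ r i) (hrmono : Monotone r) (hd : d = ∑ i, r i)
    (h3 : ¬(n = 3 ∧ ∀ i, r i ≤ 2)) (h4 : ¬(n = 4 ∧ ∀ i, r i = 1))
    (V : Fin n → Finset (Fin d)) (hVcard : ∀ k, (V k).card = r k)
    (hVdisj : ∀ k l, k ≠ l → Disjoint (V k) (V l))
    (hVcover : ∀ i : Fin d, ∃ k, i ∈ V k)
    (a : Fin d → ℤ) (ha1 : ∀ i, 1 ≤ a i)
    (ha2 : ∀ k, 2 + 2 * ∑ j ∈ V k, a j ≤ ∑ i, a i)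
    (u : Fin d → ℕ)
    (hu : ∀ k, (d : ℤ) - (r k : ℤ) - 2 + 2 * ∑ j ∈ V k, (u j : ℤ) ≤ ∑ i, (u i : ℤ))
    (hu0 : u ≠ 0) :
    3 ≤ (∑ i, a i) + (∑ i, (u i : ℤ)) - (d : ℤ) := by
  -- pick j with u j ≥ 1
  obtain ⟨j, hj⟩ : ∃ j, 1 ≤ u j := by
    by_contra h
    push_neg at h
    exact hu0 (funext fun j => Nat.lt_one_iff.mp (h j))
  obtain ⟨k, hk⟩ := hVcover j
  -- Σ_{V k} u ≥ 1
  have hsumu : (1 : ℤ) ≤ ∑ i ∈ V k, (u i : ℤ) := by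
    have := Finset.single_le_sum (f := fun i => (u i : ℤ))
      (fun i _ => by positivity) hk
    simpa using le_trans (show (1:ℤ) ≤ (u j : ℤ) by exact_mod_cast hj) this
  -- Σ_{V k} a ≥ r k
  have hsuma : (r k : ℤ) ≤ ∑ i ∈ V k, a i := by
    calc (r k : ℤ) = ∑ _i ∈ V k, (1 : ℤ) := by
          rw [Finset.sum_const, hVcard k]; simp
      _ ≤ ∑ i ∈ V k, a i := Finset.sum_le_sum fun i _ => ha1 i
  have h1 := ha2 k
  have h2 := hu k
  have hrk : (1 : ℤ) ≤ (r k : ℤ) := by exact_mod_cast hrpos k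
  linarith
end

section
/- Let n ≥ 4 and let V_1, ..., V_n partition [d] with |V_k| = r_k ≥ 1, and assume the non-Gorenstein hypotheses of Theorem 1.6. Suppose u ∈ ℤ^d satisfies u_i ≥ 1 for all i, Σ u_i even, and Σ u_i ≥ 2 + 2·Σ_{j∈V_k} u_j for all k. Fix i ∈ V_k with r_k = 1 and u_i ≥ 2. Then there exists k₁ ≠ k that is not a heavy component of u (i.e., Σ u_i > 2 + 2·Σ_{j∈V_{k₁}} u_j), and for any j ∈ V_{k₁}, the vector u' = u − e_i + e_j again satisfies u'_ℓ ≥ 1 for all ℓ, Σ u'_ℓ even, and Σ u'_ℓ ≥ 2 + 2·Σ_{j∈V_m} u'_j for all m. -/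
theorem stmt_15 (n d : ℕ) (hn : 4 ≤ n) (r : Fin n → ℕ)
    (hrpos : ∀ i, 1 ≤ r i) (hrmono : Monotone r) (hd : d = ∑ i, r i)
    (h3 : ¬(n = 3 ∧ ∀ i, r i ≤ 2)) (h4 : ¬(n = 4 ∧ ∀ i, r i = 1))
    (V : Fin n → Finset (Fin d)) (hVcard : ∀ k, (V k).card = r k)
    (hVdisj : ∀ k l, k ≠ l → Disjoint (V k) (V l))
    (hVcover : ∀ i : Fin d, ∃ k, i ∈ V k)
    (u : Fin d → ℤ) (hpos : ∀ i, 1 ≤ u i)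
    (heven : (∑ i, u i) % 2 = 0)
    (hineq : ∀ k, 2 + 2 * ∑ j ∈ V k, u j ≤ ∑ i, u i)
    (k : Fin n) (i : Fin d) (hik : i ∈ V k) (hrk : r k = 1) (hui : 2 ≤ u i) :
    ∃ k₁ : Fin n, k₁ ≠ k ∧
      2 + 2 * ∑ j ∈ V k₁, u j < ∑ i', u i' ∧
      ∀ j ∈ V k₁, ∀ u' : Fin d → ℤ,
        (u' = fun ℓ => u ℓ - (if ℓ = i then 1 else 0) + (if ℓ = j then 1 else 0)) →
        (∀ ℓ, 1 ≤ u' ℓ) ∧ (∑ ℓ, u' ℓ) % 2 = 0 ∧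
        ∀ m, 2 + 2 * ∑ j' ∈ V m, u' j' ≤ ∑ ℓ, u' ℓ := by
  set T : ℤ := ∑ i', u i' with hT
  -- V k = {i}
  have hVk : V k = {i} := by
    have h1 : (V k).card = 1 := by rw [hVcard, hrk]
    obtain ⟨a, ha⟩ := Finset.card_eq_one.mp h1
    rw [ha] at hik ⊢
    simp at hik
    simp [hik]
  have hSk : ∑ j ∈ V k, u j = u i := by rw [hVk]; simp
  -- partition sum
  have hcover : Finset.univ.biUnion V = (Finset.univ : Finset (Fin d)) := by
    ext x
    simp only [Finset.mem_biUnion, Finset.mem_univ, iff_true, true_and]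
    exact hVcover x
  have hpart : ∑ m, ∑ j ∈ V m, u j = T := by
    rw [hT, ← hcover, Finset.sum_biUnion]
    intro a _ b _ hab
    exact hVdisj a b hab
  -- existence of a non-heavy component ≠ k
  have hex : ∃ k₁, k₁ ≠ k ∧ 2 + 2 * ∑ j ∈ V k₁, u j < T := by
    by_contra h
    push_neg at h
    have heq : ∀ k₁ ∈ Finset.univ.erase k, 2 * ∑ j ∈ V k₁, u j = T - 2 := by
      intro k₁ hk₁
      have h1 := hineq k₁
      have h2 := h k₁ (Finset.ne_of_mem_erase hk₁)
      omega
    have hsum : ∑ m ∈ Finset.univ.erase k, (2 * ∑ j ∈ V m, u j)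
        = ((n - 1 : ℕ) : ℤ) * (T - 2) := by
      rw [Finset.sum_congr rfl heq, Finset.sum_const, nsmul_eq_mul]
      congr 1
      rw [Finset.card_erase_of_mem (Finset.mem_univ k)]
      simp
    have herase : ∑ m ∈ Finset.univ.erase k, ∑ j ∈ V m, u j = T - u i := by
      have h := Finset.add_sum_erase Finset.univ (fun m => ∑ j ∈ V m, u j)
        (Finset.mem_univ k)
      simp only [hSk, hpart] at h
      omega
    rw [← Finset.mul_sum, herase] at hsum
    have hn3 : (3 : ℤ) ≤ ((n - 1 : ℕ) : ℤ) := by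
      have : 3 ≤ n - 1 := by omega
      exact_mod_cast this
    have hT6 : 6 ≤ T := by have := hineq k; rw [hSk] at this; omega
    nlinarith [mul_le_mul_of_nonneg_right hn3 (by omega : (0:ℤ) ≤ T - 2)]
  obtain ⟨k₁, hk₁k, hstrict⟩ := hex
  refine ⟨k₁, hk₁k, hstrict, ?_⟩
  intro j hj u' hu'
  have hij : j ≠ i := by
    intro h
    exact (Finset.disjoint_left.mp (hVdisj k₁ k hk₁k) hj) (h ▸ hik)
  have hone : ∀ ℓ, 1 ≤ u' ℓ := by
    intro ℓ
    simp only [hu']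
    have h1 := hpos ℓ
    by_cases hℓi : ℓ = i
    · subst hℓi
      rw [if_pos rfl, if_neg (fun h => hij h.symm)]
      omega
    · rw [if_neg hℓi]
      split_ifs <;> omega
  have hsum' : ∑ ℓ, u' ℓ = T := by
    simp only [hu', hT]
    rw [Finset.sum_add_distrib, Finset.sum_sub_distrib]
    simp [Finset.sum_ite_eq']
  refine ⟨hone, by rw [hsum']; exact heven, ?_⟩
  intro m
  rw [hsum']
  have hVm : ∑ j' ∈ V m, u' j' = (∑ j' ∈ V m, u j')
      - (if i ∈ V m then 1 else 0) + (if j ∈ V m then 1 else 0) := by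
    simp only [hu']
    rw [Finset.sum_add_distrib, Finset.sum_sub_distrib]
    simp [Finset.sum_ite_eq']
  rw [hVm]
  by_cases hm1 : m = k₁
  · subst hm1
    have hiVm : i ∉ V m := Finset.disjoint_left.mp (hVdisj k m (fun h => hk₁k h.symm)) hik
    rw [if_neg hiVm, if_pos hj]
    omega
  · have hjVm : j ∉ V m := Finset.disjoint_left.mp (hVdisj k₁ m (fun h => hm1 h.symm)) hj
    rw [if_neg hjVm]
    have h1 := hineq m
    split_ifs <;> omega
end
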